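/- Assume the coordinate quasi-Codazzi setup on U and that Φ⁺ x and Φ⁻ x are invertible for every x ∈ U, and define ∇̃⁺_X Y (x) := (Φ⁺ x)⁻¹ ((∇⁺_X(Φ⁺Y))(x)). Then for all smooth vector fields X, Y, Z : U → ℝⁿ and all x ∈ U: C(X,Y,Z)(x) = fderiv ℝ (fun y ↦ h y (Y y) (Z y)) x (X x) − h x ((∇̃⁺_X Y)(x)) (Z x) − h x ((∇̃⁺_X Z)(x)) (Y x). That is, when h is nondegenerate the generalized cubic tensor C equals the classical Amari–Chentsov tensor ∇̃⁺h. (Paper's Lemma 3.13, in a trivialization.) -/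

import Mathlib

/-!
Differentiating the Lagrangian identity `p(Φ⁺Y, Φ⁻Z) = p(Φ⁺Z, Φ⁻Y)` along `X`, with the
duality of `∇⁺` and `∇⁻` turning each derivative of a pairing into a sum of two covariant
terms, gives
`p(∇⁺_X Φ⁺Y, Φ⁻Z) + p(Φ⁺Y, ∇⁻_X Φ⁻Z) = p(∇⁺_X Φ⁺Z, Φ⁻Y) + p(Φ⁺Z, ∇⁻_X Φ⁻Y)`.
Since `h(∇̃⁺_X Y, Z) = 2 p(∇⁺_X Φ⁺Y, Φ⁻Z)`, expanding `X h(Y, Z)` the same way and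
substituting this identity leaves exactly `C(X, Y, Z)`.
-/

noncomputable section

open Set

/-- ℝⁿ. -/
abbrev Vn (n : ℕ) : Type := Fin n → ℝ

/-- Pairings (fiber metrics pairing `E⁺` with `E⁻`) on the trivialized bundle. -/
abbrev Pairn (n : ℕ) : Type := Vn n →L[ℝ] Vn n →L[ℝ] ℝ

/-- Connection forms on the trivialized bundle. -/
abbrev Connn (n : ℕ) : Type := Vn n →L[ℝ] Vn n →L[ℝ] Vn n

/-- Bundle maps `TU → E±` in the trivialization. -/
abbrev Bdln (n : ℕ) : Type := Vn n →L[ℝ] Vn n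

/-- Covariant derivative of the section `ν` along the vector field `X`,
for the connection with connection form `A`. -/
def cov {n : ℕ} (A : Vn n → Connn n) (X ν : Vn n → Vn n) (x : Vn n) : Vn n :=
  fderiv ℝ ν x (X x) + A x (X x) (ν x)

/-- Lie bracket of vector fields on an open set of ℝⁿ. -/
def lieB {n : ℕ} (X Y : Vn n → Vn n) (x : Vn n) : Vn n :=
  fderiv ℝ Y x (X x) - fderiv ℝ X x (Y x)

/-- The section `Φ±Y : x ↦ Φ± x (Y x)`. -/
def secPhi {n : ℕ} (Φ : Vn n → Bdln n) (Y : Vn n → Vn n) : Vn n → Vn n :=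
  fun x => Φ x (Y x)

/-- The induced (possibly degenerate) metric `h x y z = 2 p x (Φ⁺ x y) (Φ⁻ x z)`. -/
def hmet {n : ℕ} (p : Vn n → Pairn n) (Φp Φm : Vn n → Bdln n) (x y z : Vn n) : ℝ :=
  2 * p x (Φp x y) (Φm x z)

/-- The generalized Amari–Chentsov cubic tensor. -/
def Ctensor {n : ℕ} (p : Vn n → Pairn n) (Ap Am : Vn n → Connn n)
    (Φp Φm : Vn n → Bdln n) (X Y Z : Vn n → Vn n) (x : Vn n) : ℝ :=
  -2 * (p x (cov Ap X (secPhi Φp Y) x) (Φm x (Z x))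
        - p x (Φp x (Z x)) (cov Am X (secPhi Φm Y) x))

/-- The relative torsion `T(X,Y) = ∇_X(ΦY) − ∇_Y(ΦX) − Φ[X,Y]`. -/
def Ttor {n : ℕ} (A : Vn n → Connn n) (Φ : Vn n → Bdln n)
    (X Y : Vn n → Vn n) (x : Vn n) : Vn n :=
  cov A X (secPhi Φ Y) x - cov A Y (secPhi Φ X) x - Φ x (lieB X Y x)

/-- The Kossowski pseudo-connection. -/
def Koss {n : ℕ} (p : Vn n → Pairn n) (Φp Φm : Vn n → Bdln n)
    (X Y Z : Vn n → Vn n) (x : Vn n) : ℝ :=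
  fderiv ℝ (fun y => p y (Φp y (Y y)) (Φm y (Z y))) x (X x)
  + fderiv ℝ (fun y => p y (Φp y (Z y)) (Φm y (X y))) x (Y x)
  - fderiv ℝ (fun y => p y (Φp y (X y)) (Φm y (Y y))) x (Z x)
  - p x (Φp x (X x)) (Φm x (lieB Y Z x))
  + p x (Φp x (Y x)) (Φm x (lieB Z X x))
  + p x (Φp x (Z x)) (Φm x (lieB X Y x))

/-- The curvature of a connection form `A` at `x` in directions `v`, `w`. -/
def curvA {n : ℕ} (A : Vn n → Connn n) (x v w : Vn n) : Vn n →L[ℝ] Vn n :=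
  fderiv ℝ A x v w - fderiv ℝ A x w v + (A x v).comp (A x w) - (A x w).comp (A x v)

open Filter Topology

theorem fderiv_clm_clm_apply {E F G H : Type*}
    [NormedAddCommGroup E] [NormedSpace ℝ E] [NormedAddCommGroup F] [NormedSpace ℝ F]
    [NormedAddCommGroup G] [NormedSpace ℝ G] [NormedAddCommGroup H] [NormedSpace ℝ H]
    {p : E → F →L[ℝ] G →L[ℝ] H} {f : E → F} {g : E → G} {x : E}
    (hp : DifferentiableAt ℝ p x) (hf : DifferentiableAt ℝ f x) (hg : DifferentiableAt ℝ g x)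
    (v : E) :
    fderiv ℝ (fun y => p y (f y) (g y)) x v
      = fderiv ℝ p x v (f x) (g x) + p x (fderiv ℝ f x v) (g x)
        + p x (f x) (fderiv ℝ g x v) := by
  rw [fderiv_clm_apply (hp.clm_apply hf) hg, fderiv_clm_apply hp hf]
  simp only [add_apply, ContinuousLinearMap.comp_apply, ContinuousLinearMap.flip_apply]
  abel

section

variable {n : ℕ} {p : Vn n → Pairn n} {Ap Am : Vn n → Connn n} {x : Vn n}

theorem fderiv_pair_eq_cov_add_cov
    (hdual : ∀ v a b : Vn n, fderiv ℝ p x v a b = p x (Ap x v a) b + p x a (Am x v b))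
    (hp : DifferentiableAt ℝ p x) {f g : Vn n → Vn n}
    (hf : DifferentiableAt ℝ f x) (hg : DifferentiableAt ℝ g x) (X : Vn n → Vn n) :
    fderiv ℝ (fun y => p y (f y) (g y)) x (X x)
      = p x (cov Ap X f x) (g x) + p x (f x) (cov Am X g x) := by
  rw [fderiv_clm_clm_apply hp hf hg, hdual]
  simp only [cov, map_add, add_apply]
  ring

variable {Φp Φm : Vn n → Bdln n} {X Y Z : Vn n → Vn n}

theorem pair_cov_symm_of_lagrangian {U : Set (Vn n)} (hU : U ∈ 𝓝 x)
    (hLag : ∀ y ∈ U, ∀ a b : Vn n, p y (Φp y a) (Φm y b) = p y (Φp y b) (Φm y a))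
    (hdual : ∀ v a b : Vn n, fderiv ℝ p x v a b = p x (Ap x v a) b + p x a (Am x v b))
    (hp : DifferentiableAt ℝ p x) (hΦp : DifferentiableAt ℝ Φp x)
    (hΦm : DifferentiableAt ℝ Φm x) (hY : DifferentiableAt ℝ Y x)
    (hZ : DifferentiableAt ℝ Z x) :
    p x (cov Ap X (secPhi Φp Y) x) (Φm x (Z x)) + p x (Φp x (Y x)) (cov Am X (secPhi Φm Z) x)
      = p x (cov Ap X (secPhi Φp Z) x) (Φm x (Y x))
        + p x (Φp x (Z x)) (cov Am X (secPhi Φm Y) x) := by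
  have hsymm : (fun y => p y (secPhi Φp Y y) (secPhi Φm Z y))
      =ᶠ[𝓝 x] fun y => p y (secPhi Φp Z y) (secPhi Φm Y y) := by
    filter_upwards [hU] with y hy
    exact hLag y hy (Y y) (Z y)
  calc _ = fderiv ℝ (fun y => p y (secPhi Φp Y y) (secPhi Φm Z y)) x (X x) :=
        (fderiv_pair_eq_cov_add_cov hdual hp (hΦp.clm_apply hY) (hΦm.clm_apply hZ) X).symm
    _ = fderiv ℝ (fun y => p y (secPhi Φp Z y) (secPhi Φm Y y)) x (X x) := by
        rw [hsymm.fderiv_eq]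
    _ = _ := fderiv_pair_eq_cov_add_cov hdual hp (hΦp.clm_apply hZ) (hΦm.clm_apply hY) X

theorem fderiv_hmet_eq
    (hdual : ∀ v a b : Vn n, fderiv ℝ p x v a b = p x (Ap x v a) b + p x a (Am x v b))
    (hp : DifferentiableAt ℝ p x) (hΦp : DifferentiableAt ℝ Φp x)
    (hΦm : DifferentiableAt ℝ Φm x) (hY : DifferentiableAt ℝ Y x)
    (hZ : DifferentiableAt ℝ Z x) :
    fderiv ℝ (fun y => hmet p Φp Φm y (Y y) (Z y)) x (X x)
      = 2 * (p x (cov Ap X (secPhi Φp Y) x) (Φm x (Z x))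
        + p x (Φp x (Y x)) (cov Am X (secPhi Φm Z) x)) := by
  have hpair : DifferentiableAt ℝ (fun y => p y (secPhi Φp Y y) (secPhi Φm Z y)) x :=
    (hp.clm_apply (hΦp.clm_apply hY)).clm_apply (hΦm.clm_apply hZ)
  change fderiv ℝ (fun y => 2 * p y (secPhi Φp Y y) (secPhi Φm Z y)) x (X x) = _
  rw [fderiv_const_mul hpair, smul_apply, smul_eq_mul]
  exact congrArg (2 * ·) <|
    fderiv_pair_eq_cov_add_cov hdual hp (hΦp.clm_apply hY) (hΦm.clm_apply hZ) X

end

theorem statement9_general {n : ℕ} (U : Set (Vn n)) (hUopen : IsOpen U)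
    (p : Vn n → Pairn n) (hpsmooth : ContDiffOn ℝ (⊤ : ℕ∞) p U)
    (Ap Am : Vn n → Connn n)
    (hdual : ∀ x ∈ U, ∀ v a b : Vn n,
      fderiv ℝ p x v a b = p x (Ap x v a) b + p x a (Am x v b))
    (Φp Φm : Vn n → Bdln n)
    (hΦpsmooth : ContDiffOn ℝ (⊤ : ℕ∞) Φp U) (hΦmsmooth : ContDiffOn ℝ (⊤ : ℕ∞) Φm U)
    (hLag : ∀ x ∈ U, ∀ y z : Vn n, p x (Φp x y) (Φm x z) = p x (Φp x z) (Φm x y))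
    -- pointwise inverses of Φ⁺ and Φ⁻ (so Φ⁺ x and Φ⁻ x are invertible on U)
    (Ψp : Vn n → Bdln n)
    (hΨp : ∀ x ∈ U, (∀ v : Vn n, Ψp x (Φp x v) = v) ∧ (∀ v : Vn n, Φp x (Ψp x v) = v)) :
    ∀ X Y Z : Vn n → Vn n,
      ContDiffOn ℝ (⊤ : ℕ∞) X U → ContDiffOn ℝ (⊤ : ℕ∞) Y U → ContDiffOn ℝ (⊤ : ℕ∞) Z U →
      ∀ x ∈ U,
        Ctensor p Ap Am Φp Φm X Y Z x
          = fderiv ℝ (fun y => hmet p Φp Φm y (Y y) (Z y)) x (X x)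
            - hmet p Φp Φm x (Ψp x (cov Ap X (secPhi Φp Y) x)) (Z x)
            - hmet p Φp Φm x (Ψp x (cov Ap X (secPhi Φp Z) x)) (Y x) := by
  intro X Y Z _ hY hZ x hx
  have hU : U ∈ 𝓝 x := hUopen.mem_nhds hx
  have hdiff {E : Type} [NormedAddCommGroup E] [NormedSpace ℝ E] {f : Vn n → E}
      (hf : ContDiffOn ℝ (⊤ : ℕ∞) f U) : DifferentiableAt ℝ f x :=
    (hf.differentiableOn (by simp)).differentiableAt hU
  have hsymm := pair_cov_symm_of_lagrangian (X := X) hU hLag (hdual x hx)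
    (hdiff hpsmooth) (hdiff hΦpsmooth) (hdiff hΦmsmooth) (hdiff hY) (hdiff hZ)
  rw [fderiv_hmet_eq (hdual x hx) (hdiff hpsmooth) (hdiff hΦpsmooth) (hdiff hΦmsmooth)
    (hdiff hY) (hdiff hZ)]
  simp only [Ctensor, hmet, (hΨp x hx).2]
  linarith

/-- Paper's Lemma 3.13 (in a trivialization): in the coordinate quasi-Codazzi setup,
if `Φ⁺ x` and `Φ⁻ x` are invertible for every `x ∈ U` (with pointwise inverses `Ψ⁺`,
`Ψ⁻`), then the generalized cubic tensor `C` coincides with the classical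
Amari–Chentsov tensor `∇̃⁺h`, where `∇̃⁺_X Y = (Φ⁺)⁻¹ ∇⁺_X(Φ⁺Y)`. -/
theorem statement9 {n : ℕ} (U : Set (Vn n)) (hUopen : IsOpen U)
    (p : Vn n → Pairn n) (hpsmooth : ContDiffOn ℝ (⊤ : ℕ∞) p U)
    (Ap Am : Vn n → Connn n)
    (hApsmooth : ContDiffOn ℝ (⊤ : ℕ∞) Ap U) (hAmsmooth : ContDiffOn ℝ (⊤ : ℕ∞) Am U)
    (hdual : ∀ x ∈ U, ∀ v a b : Vn n,
      fderiv ℝ p x v a b = p x (Ap x v a) b + p x a (Am x v b))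
    (Φp Φm : Vn n → Bdln n)
    (hΦpsmooth : ContDiffOn ℝ (⊤ : ℕ∞) Φp U) (hΦmsmooth : ContDiffOn ℝ (⊤ : ℕ∞) Φm U)
    (hLag : ∀ x ∈ U, ∀ y z : Vn n, p x (Φp x y) (Φm x z) = p x (Φp x z) (Φm x y))
    -- pointwise inverses of Φ⁺ and Φ⁻ (so Φ⁺ x and Φ⁻ x are invertible on U)
    (Ψp Ψm : Vn n → Bdln n)
    (hΨp : ∀ x ∈ U, (∀ v : Vn n, Ψp x (Φp x v) = v) ∧ (∀ v : Vn n, Φp x (Ψp x v) = v))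
    (hΨm : ∀ x ∈ U, (∀ v : Vn n, Ψm x (Φm x v) = v) ∧ (∀ v : Vn n, Φm x (Ψm x v) = v)) :
    ∀ X Y Z : Vn n → Vn n,
      ContDiffOn ℝ (⊤ : ℕ∞) X U → ContDiffOn ℝ (⊤ : ℕ∞) Y U → ContDiffOn ℝ (⊤ : ℕ∞) Z U →
      ∀ x ∈ U,
        Ctensor p Ap Am Φp Φm X Y Z x
          = fderiv ℝ (fun y => hmet p Φp Φm y (Y y) (Z y)) x (X x)
            - hmet p Φp Φm x (Ψp x (cov Ap X (secPhi Φp Y) x)) (Z x)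
            - hmet p Φp Φm x (Ψp x (cov Ap X (secPhi Φp Z) x)) (Y x) :=
  statement9_general U hUopen p hpsmooth Ap Am hdual Φp Φm hΦpsmooth hΦmsmooth hLag Ψp hΨp
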